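/- arXiv:2403.11925 — 5 statements merged into one kernel-verified Lean document; each statement's English description precedes it below -/
import Mathlib

section
/- Let π and π' be policies for a finite MDP, let d be a probability vector on S that is stationary for π, and set J = Σ_s d(s) Σ_a π(a|s) r(s,a). Suppose J' ∈ ℝ and V' : S → ℝ satisfy the average-reward Bellman equation for π', and define the advantage function A'(s,a) = r(s,a) − J' + Σ_{s'} P(s'|s,a) V'(s') − V'(s). Then J − J' = Σ_s d(s) Σ_a π(a|s) A'(s,a). -/
/-- Average-reward performance difference lemma (Lemma 7 of the paper): for policies
`π`, `π'` of a finite MDP, `d` stationary for `π`, `J = ∑_s d(s) ∑_a π(a|s) r(s,a)`,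
and `(J', V')` satisfying the average-reward Bellman equation for `π'`, one has
`J − J' = ∑_s d(s) ∑_a π(a|s) A'(s,a)` where
`A'(s,a) = r(s,a) − J' + ∑_{s'} P(s'|s,a) V'(s') − V'(s)`. -/
theorem stmt_1 {S A : Type*} [Fintype S] [Fintype A] [Nonempty S] [Nonempty A]
    (P : S → A → S → ℝ) (hP0 : ∀ s a s', 0 ≤ P s a s') (hP1 : ∀ s a, ∑ s', P s a s' = 1)
    (r : S → A → ℝ)
    (π : S → A → ℝ) (hπ0 : ∀ s a, 0 ≤ π s a) (hπ1 : ∀ s, ∑ a, π s a = 1)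
    (π' : S → A → ℝ) (hπ'0 : ∀ s a, 0 ≤ π' s a) (hπ'1 : ∀ s, ∑ a, π' s a = 1)
    (d : S → ℝ) (hd0 : ∀ s, 0 ≤ d s) (hd1 : ∑ s, d s = 1)
    (hstat : ∀ s', ∑ s, ∑ a, d s * π s a * P s a s' = d s')
    (J' : ℝ) (V' : S → ℝ)
    (hBell : ∀ s, V' s = ∑ a, π' s a * (r s a - J' + ∑ s', P s a s' * V' s')) :
    (∑ s, d s * ∑ a, π s a * r s a) - J'
      = ∑ s, d s * ∑ a, π s a * (r s a - J' + (∑ s', P s a s' * V' s') - V' s) := by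
  have key : ∑ s, d s * ∑ a, π s a * (∑ s', P s a s' * V' s') = ∑ s, d s * V' s := by
    calc ∑ s, d s * ∑ a, π s a * (∑ s', P s a s' * V' s')
        = ∑ s, ∑ a, ∑ s', d s * π s a * P s a s' * V' s' := by
          simp only [Finset.mul_sum]; ring_nf
      _ = ∑ s, ∑ s', ∑ a, d s * π s a * P s a s' * V' s' :=
          Finset.sum_congr rfl fun s _ => Finset.sum_comm
      _ = ∑ s', ∑ s, ∑ a, d s * π s a * P s a s' * V' s' := Finset.sum_comm
      _ = ∑ s', (∑ s, ∑ a, d s * π s a * P s a s') * V' s' := by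
          simp [Finset.sum_mul]
      _ = ∑ s', d s' * V' s' := by simp [hstat]
  have expand : ∀ s, ∑ a, π s a * (r s a - J' + (∑ s', P s a s' * V' s') - V' s)
      = (∑ a, π s a * r s a) - J' + (∑ a, π s a * (∑ s', P s a s' * V' s')) - V' s := by
    intro s
    have : ∀ a, π s a * (r s a - J' + (∑ s', P s a s' * V' s') - V' s)
        = π s a * r s a - π s a * J' + π s a * (∑ s', P s a s' * V' s') - π s a * V' s := by
      intro a; ring
    simp only [this, Finset.sum_sub_distrib, Finset.sum_add_distrib, ← Finset.sum_mul, hπ1,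
      one_mul]
  have expand2 : ∀ s, d s * ∑ a, π s a * (r s a - J' + (∑ s', P s a s' * V' s') - V' s)
      = d s * (∑ a, π s a * r s a) - d s * J' + d s * (∑ a, π s a * (∑ s', P s a s' * V' s'))
        - d s * V' s := by
    intro s; rw [expand s]; ring
  simp only [expand2, Finset.sum_sub_distrib, Finset.sum_add_distrib, key, ← Finset.sum_mul, hd1,
    one_mul]
  ring
end

section
/- Consider a finite MDP with state set S, action set A, transition kernel P and reward function r. Let q ∈ ℕ and suppose: (i) for every θ ∈ ℝ^q, π_θ is a policy with π_θ(a|s) > 0 for all s, a, and for each (s,a) the map θ ↦ π_θ(a|s) is differentiable; (ii) for every θ, d_θ is a probability vector on S that is stationary for π_θ, and for each s the map θ ↦ d_θ(s) is differentiable; (iii) J(θ) = Σ_s d_θ(s) Σ_a π_θ(a|s) r(s,a); (iv) for every θ, the pair (J(θ), V_θ) satisfies the average-reward Bellman equation for π_θ, and for each s the map θ ↦ V_θ(s) is differentiable. Define Q_θ(s,a) = r(s,a) − J(θ) + Σ_{s'} P(s'|s,a) V_θ(s') and A_θ(s,a) = Q_θ(s,a) − V_θ(s). Then J is differentiable and for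 every θ, ∇_θ J(θ) = Σ_s d_θ(s) Σ_a π_θ(a|s) A_θ(s,a) ∇_θ log π_θ(a|s). -/
/-!
Differentiating the Bellman equation `V s = ∑ a, π(a|s) Q(s,a)` gives
`∇V s = ∑ a, (π(a|s) (-∇J + ∑ s', P(s'|s,a) ∇V s') + Q(s,a) ∇π(a|s))`.
Averaging over the stationary distribution `d`, stationarity turns the transition term into
`∑ s, d s ∇V s`, which cancels against the left side, and `∑ a, π(a|s) = ∑ s, d s = 1` leaves
`∇J = ∑ s, d s ∑ a, Q(s,a) ∇π(a|s)`. As `∑ a, ∇π(a|s) = 0`, the baseline `V s` may be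
subtracted from `Q`, and `∇π = π ∇log π` gives the score-function form.
-/

open Finset

namespace AverageReward

variable {S A : Type*} [Fintype S]

def qValue (P : S → A → S → ℝ) (r : S → A → ℝ) (j : ℝ) (v : S → ℝ) (s : S) (a : A) : ℝ :=
  r s a - j + ∑ s', P s a s' * v s'

section Algebra

variable [Fintype A] {M : Type*} [AddCommGroup M] [Module ℝ M]
  {P : S → A → S → ℝ} {d : S → ℝ} {π : S → A → ℝ}

theorem sum_smul_transition_of_stationary
    (hstat : ∀ s', ∑ s, ∑ a, d s * π s a * P s a s' = d s') (f : S → M) :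
    ∑ s, d s • ∑ a, π s a • ∑ s', P s a s' • f s' = ∑ s', d s' • f s' := calc
  ∑ s, d s • ∑ a, π s a • ∑ s', P s a s' • f s'
      = ∑ s', (∑ s, ∑ a, d s * π s a * P s a s') • f s' := by
    simp only [smul_sum, sum_smul, smul_smul, mul_assoc]
    exact sum_comm_cycle
  _ = ∑ s', d s' • f s' := by simp only [hstat]

theorem eq_sum_smul_of_bellman_deriv (hd1 : ∑ s, d s = 1) (hπ1 : ∀ s, ∑ a, π s a = 1)
    (hstat : ∀ s', ∑ s, ∑ a, d s * π s a * P s a s' = d s') (Q : S → A → ℝ)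
    (DJ : M) (DV : S → M) (Dπ : S → A → M)
    (hDV : ∀ s, DV s = ∑ a, (π s a • (-DJ + ∑ s', P s a s' • DV s') + Q s a • Dπ s a)) :
    DJ = ∑ s, d s • ∑ a, Q s a • Dπ s a := by
  have hmean : ∑ s, d s • ∑ a, π s a • -DJ = -DJ := by
    simp only [← sum_smul, hπ1, one_smul, hd1]
  have h : ∑ s, d s • DV s = -DJ + ∑ s, d s • DV s + ∑ s, d s • ∑ a, Q s a • Dπ s a := by
    conv_lhs => rw [sum_congr rfl fun s _ => congrArg (d s • ·) (hDV s)]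
    simp only [smul_add, sum_add_distrib, hmean, sum_smul_transition_of_stationary hstat]
  linear_combination (norm := module) h

end Algebra

section Calculus

variable {E : Type*} [NormedAddCommGroup E] [NormedSpace ℝ E] {θ : E}

theorem sum_fderiv_eq_zero_of_sum_eq_const {ι : Type*} {u : Finset ι} {f : ι → E → ℝ} {c : ℝ}
    (hf : ∀ i ∈ u, DifferentiableAt ℝ (f i) θ) (hsum : ∀ θ', ∑ i ∈ u, f i θ' = c) :
    ∑ i ∈ u, fderiv ℝ (f i) θ = 0 := by
  rw [← fderiv_fun_sum hf, funext hsum, fderiv_const_apply]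

theorem hasFDerivAt_qValue (P : S → A → S → ℝ) (r : S → A → ℝ) {J : E → ℝ} {V : E → S → ℝ}
    {DJ : E →L[ℝ] ℝ} {DV : S → E →L[ℝ] ℝ} (hJ : HasFDerivAt J DJ θ)
    (hV : ∀ s, HasFDerivAt (V · s) (DV s) θ) (s : S) (a : A) :
    HasFDerivAt (fun θ' => qValue P r (J θ') (V θ') s a) (-DJ + ∑ s', P s a s' • DV s') θ :=
  (hJ.const_sub (r s a)).add (HasFDerivAt.fun_sum fun s' _ => (hV s').const_mul (P s a s'))

variable [Fintype A] {P : S → A → S → ℝ} {r : S → A → ℝ} {π : E → S → A → ℝ} {d : S → ℝ}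
  {J : E → ℝ} {V : E → S → ℝ}

theorem fderiv_gain_eq_sum_smul_sum_qValue_smul
    (hπ : ∀ s a, DifferentiableAt ℝ (π · s a) θ) (hJ : DifferentiableAt ℝ J θ)
    (hV : ∀ s, DifferentiableAt ℝ (V · s) θ) (hd1 : ∑ s, d s = 1) (hπ1 : ∀ s, ∑ a, π θ s a = 1)
    (hstat : ∀ s', ∑ s, ∑ a, d s * π θ s a * P s a s' = d s')
    (hBell : ∀ θ s, V θ s = ∑ a, π θ s a * qValue P r (J θ) (V θ) s a) :
    fderiv ℝ J θ = ∑ s, d s • ∑ a, qValue P r (J θ) (V θ) s a • fderiv ℝ (π · s a) θ := by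
  refine eq_sum_smul_of_bellman_deriv hd1 hπ1 hstat _ _ (fun s => fderiv ℝ (V · s) θ) _ fun s => ?_
  rw [show (V · s) = _ from funext (hBell · s)]
  exact (HasFDerivAt.fun_sum fun a _ => (hπ s a).hasFDerivAt.fun_mul
    (hasFDerivAt_qValue P r hJ.hasFDerivAt (fun s' => (hV s').hasFDerivAt) s a)).fderiv

theorem fderiv_gain_eq_sum_advantage_smul_fderiv_log
    (hπ : ∀ s a, DifferentiableAt ℝ (π · s a) θ) (hJ : DifferentiableAt ℝ J θ)
    (hV : ∀ s, DifferentiableAt ℝ (V · s) θ) (hπpos : ∀ s a, 0 < π θ s a) (hd1 : ∑ s, d s = 1)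
    (hπ1 : ∀ θ s, ∑ a, π θ s a = 1) (hstat : ∀ s', ∑ s, ∑ a, d s * π θ s a * P s a s' = d s')
    (hBell : ∀ θ s, V θ s = ∑ a, π θ s a * qValue P r (J θ) (V θ) s a) :
    fderiv ℝ J θ = ∑ s, ∑ a, (d s * π θ s a * (qValue P r (J θ) (V θ) s a - V θ s)) •
      fderiv ℝ (fun θ' => Real.log (π θ' s a)) θ := by
  have hscore : ∀ s, ∑ a, fderiv ℝ (π · s a) θ = 0 := fun s =>
    sum_fderiv_eq_zero_of_sum_eq_const (fun a _ => hπ s a) (hπ1 · s)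
  rw [fderiv_gain_eq_sum_smul_sum_qValue_smul hπ hJ hV hd1 (hπ1 θ) hstat hBell]
  refine sum_congr rfl fun s _ => ?_
  calc d s • ∑ a, qValue P r (J θ) (V θ) s a • fderiv ℝ (π · s a) θ
      = d s • ∑ a, (qValue P r (J θ) (V θ) s a - V θ s) • fderiv ℝ (π · s a) θ := by
        simp only [sub_smul, sum_sub_distrib, ← smul_sum, hscore, smul_zero, sub_zero]
    _ = _ := by
      rw [smul_sum]
      refine sum_congr rfl fun a _ => ?_
      rw [fderiv.log (hπ s a) (hπpos s a).ne', smul_smul, smul_smul]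
      congr 1
      field_simp [(hπpos s a).ne']

end Calculus

end AverageReward

theorem stmt_3_general {S A : Type*} [Fintype S] [Fintype A]
    (q : ℕ)
    (P : S → A → S → ℝ)
    (r : S → A → ℝ)
    (π : EuclideanSpace ℝ (Fin q) → S → A → ℝ)
    (hπpos : ∀ θ s a, 0 < π θ s a)
    (hπ1 : ∀ θ s, ∑ a, π θ s a = 1)
    (hπdiff : ∀ s a, Differentiable ℝ (fun θ => π θ s a))
    (d : EuclideanSpace ℝ (Fin q) → S → ℝ)
    (hd1 : ∀ θ, ∑ s, d θ s = 1)
    (hstat : ∀ θ s', ∑ s, ∑ a, d θ s * π θ s a * P s a s' = d θ s')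
    (hddiff : ∀ s, Differentiable ℝ (fun θ => d θ s))
    (J : EuclideanSpace ℝ (Fin q) → ℝ)
    (hJ : ∀ θ, J θ = ∑ s, d θ s * ∑ a, π θ s a * r s a)
    (V : EuclideanSpace ℝ (Fin q) → S → ℝ)
    (hVdiff : ∀ s, Differentiable ℝ (fun θ => V θ s))
    (hBell : ∀ θ s, V θ s = ∑ a, π θ s a * (r s a - J θ + ∑ s', P s a s' * V θ s')) :
    Differentiable ℝ J ∧
      ∀ θ, gradient J θ
        = ∑ s, ∑ a,
            (d θ s * π θ s a *
              ((r s a - J θ + ∑ s', P s a s' * V θ s') - V θ s))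
              • gradient (fun θ' => Real.log (π θ' s a)) θ := by
  have hJdiff : Differentiable ℝ J := by
    rw [show J = _ from funext hJ]
    exact Differentiable.fun_sum fun s _ =>
      (hddiff s).fun_mul (Differentiable.fun_sum fun a _ => (hπdiff s a).mul_const _)
  refine ⟨hJdiff, fun θ => ?_⟩
  have hfderiv := AverageReward.fderiv_gain_eq_sum_advantage_smul_fderiv_log
    (fun s a => hπdiff s a θ) (hJdiff θ) (fun s => hVdiff s θ) (hπpos θ) (hd1 θ) hπ1
    (hstat θ) hBell
  simp only [gradient, hfderiv, map_sum, map_smulₛₗ, conj_trivial, AverageReward.qValue]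

/-- Average-reward policy gradient theorem (Lemma 1 of the paper) for a finite MDP,
with all differentiability hypotheses explicit: if `d θ` is a stationary distribution
for `π θ`, `J θ` is the stationary expected reward, and `(J θ, V θ)` satisfies the
average-reward Bellman equation for `π θ`, then `J` is differentiable and
`∇ J(θ) = ∑_s d θ s ∑_a π θ (a|s) A_θ(s,a) ∇ log π θ (a|s)`. -/
theorem stmt_3 {S A : Type*} [Fintype S] [Fintype A] [Nonempty S] [Nonempty A]
    (q : ℕ)
    (P : S → A → S → ℝ) (hP0 : ∀ s a s', 0 ≤ P s a s') (hP1 : ∀ s a, ∑ s', P s a s' = 1)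
    (r : S → A → ℝ)
    (π : EuclideanSpace ℝ (Fin q) → S → A → ℝ)
    (hπpos : ∀ θ s a, 0 < π θ s a)
    (hπ1 : ∀ θ s, ∑ a, π θ s a = 1)
    (hπdiff : ∀ s a, Differentiable ℝ (fun θ => π θ s a))
    (d : EuclideanSpace ℝ (Fin q) → S → ℝ)
    (hd0 : ∀ θ s, 0 ≤ d θ s) (hd1 : ∀ θ, ∑ s, d θ s = 1)
    (hstat : ∀ θ s', ∑ s, ∑ a, d θ s * π θ s a * P s a s' = d θ s')
    (hddiff : ∀ s, Differentiable ℝ (fun θ => d θ s))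
    (J : EuclideanSpace ℝ (Fin q) → ℝ)
    (hJ : ∀ θ, J θ = ∑ s, d θ s * ∑ a, π θ s a * r s a)
    (V : EuclideanSpace ℝ (Fin q) → S → ℝ)
    (hVdiff : ∀ s, Differentiable ℝ (fun θ => V θ s))
    (hBell : ∀ θ s, V θ s = ∑ a, π θ s a * (r s a - J θ + ∑ s', P s a s' * V θ s')) :
    Differentiable ℝ J ∧
      ∀ θ, gradient J θ
        = ∑ s, ∑ a,
            (d θ s * π θ s a *
              ((r s a - J θ + ∑ s', P s a s' * V θ s') - V θ s))
              • gradient (fun θ' => Real.log (π θ' s a)) θ :=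
  stmt_3_general q P r π hπpos hπ1 hπdiff d hd1 hstat hddiff J hJ V hVdiff hBell
end

section
/- Let (Ω, ℱ, ℙ) be a probability space, let j_max ∈ ℕ, let X_0, X_1, …, X_{j_max} : Ω → ℝ^d be integrable random vectors, and let N be a Geometric(1/2) random variable independent of (X_0, …, X_{j_max}). Define the truncated MLMC estimator Y = X_0 + 2^N (X_N − X_{N−1}) on the event {1 ≤ N ≤ j_max}, and Y = X_0 on its complement. Then E[Y] = E[X_{j_max}]. -/
/-! Writing `Δⱼ = Xⱼ - Xⱼ₋₁`, the estimator is `Y = X₀ + ∑_{1 ≤ j ≤ jmax} 1{N = j} ℙ(N = j)⁻¹ Δⱼ`.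
As `N` is independent of `Δⱼ`, the `j`-th term has expectation `ℙ(N = j) ℙ(N = j)⁻¹ 𝔼[Δⱼ] = 𝔼[Δⱼ]`,
and these telescope to `𝔼[X_jmax] - 𝔼[X₀]`. -/
open MeasureTheory ProbabilityTheory Finset

theorem Finset.sum_Icc_one_sub_pred {M : Type*} [AddCommGroup M] (f : ℕ → M) (n : ℕ) :
    ∑ j ∈ Icc 1 n, (f j - f (j - 1)) = f n - f 0 := by
  induction n with
  | zero => simp
  | succ n ih => rw [sum_Icc_succ_top (by omega), ih, Nat.add_sub_cancel]; abel

section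

variable {Ω α E : Type*} {mΩ : MeasurableSpace Ω} {μ : Measure Ω} [MeasurableSpace α]
  [NormedAddCommGroup E] [NormedSpace ℝ E] [MeasurableSpace E] [BorelSpace E]

theorem ProbabilityTheory.IndepFun.integral_indicator_preimage {N : Ω → α} {G : Ω → E}
    (hNG : IndepFun N G μ) (hN : Measurable N) (hG : AEStronglyMeasurable G μ)
    {s : Set α} (hs : MeasurableSet s) :
    ∫ ω, (N ⁻¹' s).indicator G ω ∂μ = μ.real (N ⁻¹' s) • ∫ ω, G ω ∂μ := by
  have hind : IndepFun ((N ⁻¹' s).indicator 1 : Ω → ℝ) G μ :=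
    hNG.comp (measurable_const.indicator hs) measurable_id
  calc ∫ ω, (N ⁻¹' s).indicator G ω ∂μ
      = ∫ ω, (N ⁻¹' s).indicator (1 : Ω → ℝ) ω • G ω ∂μ := by
        congr 1 with ω
        by_cases hω : ω ∈ N ⁻¹' s <;> simp [hω]
    _ = μ.real (N ⁻¹' s) • ∫ ω, G ω ∂μ := by
        rw [hind.integral_fun_smul_eq_smul_integral
          ((measurable_const.indicator (hN hs)).aestronglyMeasurable) hG,
          integral_indicator_one (hN hs)]

theorem ProbabilityTheory.integral_sum_indicator_inv_smul_of_indepFun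
    [MeasurableSingletonClass α] {N : Ω → α} (hN : Measurable N) (s : Finset α) {G : α → Ω → E} (hG : ∀ j ∈ s, Integrable (G j) μ)
    (hNG : ∀ j ∈ s, IndepFun N (G j) μ) (hpos : ∀ j ∈ s, μ.real {ω | N ω = j} ≠ 0) :
    ∫ ω, ∑ j ∈ s, {ω | N ω = j}.indicator (fun ω => (μ.real {ω | N ω = j})⁻¹ • G j ω) ω ∂μ
      = ∑ j ∈ s, ∫ ω, G j ω ∂μ := by
  have hmeas : ∀ j, MeasurableSet {ω | N ω = j} := fun j => hN (measurableSet_singleton j)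
  have hint : ∀ j ∈ s, Integrable
      ({ω | N ω = j}.indicator fun ω => (μ.real {ω | N ω = j})⁻¹ • G j ω) μ :=
    fun j hj => ((hG j hj).smul _).indicator (hmeas j)
  rw [integral_finsetSum s hint]
  refine sum_congr rfl fun j hj => ?_
  have hlevel : ∫ ω, {ω | N ω = j}.indicator (G j) ω ∂μ
      = μ.real {ω | N ω = j} • ∫ ω, G j ω ∂μ :=
    (hNG j hj).integral_indicator_preimage hN (hG j hj).aestronglyMeasurable
      (measurableSet_singleton j)
  rw [Set.indicator_const_smul, integral_smul, hlevel, smul_smul, inv_mul_cancel₀ (hpos j hj),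
    one_smul]

end

theorem stmt_4_general {Ω : Type*} [MeasurableSpace Ω] (μpr : Measure Ω)
    (d jmax : ℕ)
    (X : ℕ → Ω → EuclideanSpace ℝ (Fin d))
    (hXint : ∀ j ≤ jmax, Integrable (X j) μpr)
    (N : Ω → ℕ) (hNmeas : Measurable N)
    (hgeom : ∀ j : ℕ, 1 ≤ j → μpr {ω | N ω = j} = (1 / 2 : ENNReal) ^ j)
    (hindep : IndepFun N (fun ω => fun j : Fin (jmax + 1) => X j ω) μpr)
    (Y : Ω → EuclideanSpace ℝ (Fin d))
    (hY : ∀ ω, Y ω =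
      if 1 ≤ N ω ∧ N ω ≤ jmax then
        X 0 ω + ((2 : ℝ) ^ N ω) • (X (N ω) ω - X (N ω - 1) ω)
      else X 0 ω) :
    ∫ ω, Y ω ∂μpr = ∫ ω, X jmax ω ∂μpr := by
  set Δ : ℕ → Ω → EuclideanSpace ℝ (Fin d) := fun j ω => X j ω - X (j - 1) ω
  have hprob : ∀ j, 1 ≤ j → μpr.real {ω | N ω = j} = 2⁻¹ ^ j := fun j hj => by
    simp [measureReal_def, hgeom j hj, ENNReal.toReal_pow]
  have hYsum : ∀ ω, Y ω = X 0 ω + ∑ j ∈ Icc 1 jmax,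
      {ω | N ω = j}.indicator (fun ω => (μpr.real {ω | N ω = j})⁻¹ • Δ j ω) ω := fun ω => by
    simp only [hY ω, Set.indicator_apply, Set.mem_ofPred_eq, sum_ite_eq, mem_Icc]
    split_ifs with h
    · rw [hprob _ h.1, inv_pow, inv_inv]
    · rw [add_zero]
  have hΔint : ∀ j ∈ Icc 1 jmax, Integrable (Δ j) μpr := fun j hj => by
    obtain ⟨-, hj⟩ := mem_Icc.mp hj
    exact (hXint j hj).sub (hXint (j - 1) (by omega))
  have hΔindep : ∀ j ∈ Icc 1 jmax, IndepFun N (Δ j) μpr := fun j hj => by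
    obtain ⟨-, hj⟩ := mem_Icc.mp hj
    exact hindep.comp measurable_id (ψ := fun v : Fin (jmax + 1) → EuclideanSpace ℝ (Fin d) =>
      v ⟨j, by omega⟩ - v ⟨j - 1, by omega⟩) (by fun_prop)
  have hpos : ∀ j ∈ Icc 1 jmax, μpr.real {ω | N ω = j} ≠ 0 := fun j hj => by
    rw [hprob j (mem_Icc.mp hj).1]
    positivity
  have hlevelint : ∀ j ∈ Icc 1 jmax, Integrable
      ({ω | N ω = j}.indicator fun ω => (μpr.real {ω | N ω = j})⁻¹ • Δ j ω) μpr :=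
    fun j hj => ((hΔint j hj).smul (μpr.real {ω | N ω = j})⁻¹).indicator
      (hNmeas (measurableSet_singleton j))
  rw [integral_congr_ae (ae_of_all _ hYsum),
    integral_add (hXint 0 (Nat.zero_le _)) (integrable_finsetSum _ hlevelint),
    integral_sum_indicator_inv_smul_of_indepFun hNmeas _ hΔint hΔindep hpos,
    sum_congr rfl fun j hj => integral_sub (hXint j (mem_Icc.mp hj).2) (hXint (j - 1) (by grind)),
    sum_Icc_one_sub_pred (fun j => ∫ ω, X j ω ∂μpr), add_sub_cancel]

/-- Unbiasedness of the truncated MLMC estimator (part of Lemma 3 of the paper):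
if `N` is Geometric(1/2) and independent of the integrable random vectors
`X 0, …, X jmax`, and `Y = X 0 + 2^N (X N − X (N−1))` when `1 ≤ N ≤ jmax`
and `Y = X 0` otherwise, then `E[Y] = E[X jmax]`. -/
theorem stmt_4 {Ω : Type*} [MeasurableSpace Ω] (μpr : Measure Ω) [IsProbabilityMeasure μpr]
    (d jmax : ℕ)
    (X : ℕ → Ω → EuclideanSpace ℝ (Fin d))
    (hXmeas : ∀ j, Measurable (X j))
    (hXint : ∀ j ≤ jmax, Integrable (X j) μpr)
    (N : Ω → ℕ) (hNmeas : Measurable N)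
    (hgeom : ∀ j : ℕ, 1 ≤ j → μpr {ω | N ω = j} = (1 / 2 : ENNReal) ^ j)
    (hindep : IndepFun N (fun ω => fun j : Fin (jmax + 1) => X j ω) μpr)
    (Y : Ω → EuclideanSpace ℝ (Fin d))
    (hY : ∀ ω, Y ω =
      if 1 ≤ N ω ∧ N ω ≤ jmax then
        X 0 ω + ((2 : ℝ) ^ N ω) • (X (N ω) ω - X (N ω - 1) ω)
      else X 0 ω) :
    ∫ ω, Y ω ∂μpr = ∫ ω, X jmax ω ∂μpr :=
  stmt_4_general μpr d jmax X hXint N hNmeas hgeom hindep Y hY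
end

section
/- For every n ∈ ℕ and all nonnegative real numbers a_1, …, a_n, one has Σ_{i=1}^n a_i / √(Σ_{j=1}^i a_j) ≤ 2 √(Σ_{i=1}^n a_i), where any term whose denominator √(Σ_{j=1}^i a_j) is zero is interpreted as 0. -/
/-! Each term is bounded by the increment of `2 √S` over one step: with `u = √(S + x)` and
`v = √S` one has `x / u = (u - v) (u + v) / u ≤ 2 (u - v)`, and these increments telescope. -/

open Real Finset

lemma div_sqrt_add_le_two_mul_sub_sqrt {S x : ℝ} (hS : 0 ≤ S) (hx : 0 ≤ x) :
    x / √(S + x) ≤ 2 * (√(S + x) - √S) := by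
  have hmono : √S ≤ √(S + x) := sqrt_le_sqrt (by linarith)
  rcases (sqrt_nonneg (S + x)).eq_or_lt with hzero | hpos
  · rw [← hzero, div_zero]
    linarith [sqrt_nonneg S]
  · have hx_eq : x = √(S + x) ^ 2 - √S ^ 2 := by
      rw [sq_sqrt hS, sq_sqrt (by linarith)]; ring
    rw [div_le_iff₀ hpos]
    nlinarith [sqrt_nonneg S]

/-- AdaGrad stepsize inequality (Lemma 4.2 of Dorfman–Levy): for nonnegative reals
`a 1, …, a n`, `∑_{i=1}^n a i / √(∑_{j=1}^i a j) ≤ 2 √(∑_{i=1}^n a i)`.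
(In Lean, division by zero is zero, matching the stated convention.) -/
theorem stmt_6 (n : ℕ) (a : ℕ → ℝ) (ha : ∀ i, 0 ≤ a i) :
    ∑ i ∈ Finset.Icc 1 n, a i / Real.sqrt (∑ j ∈ Finset.Icc 1 i, a j)
      ≤ 2 * Real.sqrt (∑ i ∈ Finset.Icc 1 n, a i) := by
  induction n with
  | zero => simp
  | succ n ih =>
    rw [sum_Icc_succ_top (Nat.le_add_left 1 n), sum_Icc_succ_top (Nat.le_add_left 1 n)]
    have hstep := div_sqrt_add_le_two_mul_sub_sqrt
      (sum_nonneg fun i _ => ha i : 0 ≤ ∑ j ∈ Icc 1 n, a j) (ha (n + 1))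
    linarith
end

section
/- Let h_1, …, h_T and v_1, …, v_T be vectors in ℝ^d, let μ > 0, and let F_1, …, F_T be real symmetric d×d matrices such that each F_t − μ·I is positive semidefinite. Then each F_t is invertible and ((1/T) Σ_{t=1}^T ‖h_t − F_t^{−1} v_t‖)² ≤ (2/T) Σ_{t=1}^T ‖h_t − v_t‖² + (2(1 + 1/μ)²/T) Σ_{t=1}^T ‖v_t‖². -/
open Matrix
open scoped InnerProductSpace

/-!
If `F - μ I ⪰ 0` with `μ > 0`, then `μ ‖x‖² ≤ ⟪x, F x⟫ ≤ ‖x‖ ‖F x‖`, so `F` is invertible and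
`‖F⁻¹ v‖ ≤ ‖v‖ / μ`. The triangle inequality through `v` then bounds each term by
`‖h - v‖ + (1 + 1/μ) ‖v‖`, and the claim follows from `(a + b)² ≤ 2a² + 2b²` together with
Jensen's inequality `(mean a)² ≤ mean a²`.
-/

lemma norm_sub_le_of_norm_le_mul {E : Type*} [SeminormedAddCommGroup E] {c : ℝ} {v w : E}
    (hw : ‖w‖ ≤ c * ‖v‖) (h : E) : ‖h - w‖ ≤ ‖h - v‖ + (1 + c) * ‖v‖ :=
  calc ‖h - w‖ ≤ ‖h - v‖ + ‖v - w‖ := norm_sub_le_norm_sub_add_norm_sub h v w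
    _ ≤ ‖h - v‖ + (‖v‖ + ‖w‖) := by gcongr; exact norm_sub_le v w
    _ ≤ ‖h - v‖ + (1 + c) * ‖v‖ := by linarith

namespace Matrix

variable {n : Type*} [DecidableEq n] {A : Matrix n n ℝ} {μ : ℝ}

lemma PosSemidef.posDef_of_sub_smul_one (hA : (A - μ • 1).PosSemidef) (hμ : 0 < μ) :
    A.PosDef := by
  simpa using PosDef.posSemidef_add hA (PosDef.one.smul hμ)

variable [Fintype n]

lemma PosSemidef.mul_norm_sq_le_inner_toEuclideanLin (hA : (A - μ • 1).PosSemidef)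
    (x : EuclideanSpace ℝ n) : μ * ‖x‖ ^ 2 ≤ ⟪x, toEuclideanLin A x⟫_ℝ := by
  have h0 := hA.dotProduct_mulVec_nonneg x.ofLp
  rw [← real_inner_self_eq_norm_sq]
  simp only [EuclideanSpace.inner_eq_star_dotProduct, star_trivial, sub_mulVec, smul_mulVec,
    one_mulVec, dotProduct_sub, dotProduct_smul, smul_eq_mul, toLpLin_apply] at h0 ⊢
  rw [dotProduct_comm (A *ᵥ _)]
  linarith

lemma PosSemidef.mul_norm_le_norm_toEuclideanLin (hA : (A - μ • 1).PosSemidef)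
    (x : EuclideanSpace ℝ n) : μ * ‖x‖ ≤ ‖toEuclideanLin A x‖ := by
  rcases (norm_nonneg x).eq_or_lt with hx | hx
  · rw [← hx, mul_zero]; exact norm_nonneg _
  refine le_of_mul_le_mul_right ?_ hx
  calc μ * ‖x‖ * ‖x‖ = μ * ‖x‖ ^ 2 := by ring
    _ ≤ ⟪x, toEuclideanLin A x⟫_ℝ := hA.mul_norm_sq_le_inner_toEuclideanLin x
    _ ≤ ‖x‖ * ‖toEuclideanLin A x‖ := real_inner_le_norm _ _
    _ = ‖toEuclideanLin A x‖ * ‖x‖ := mul_comm _ _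

lemma PosSemidef.norm_toEuclideanLin_inv_le (hA : (A - μ • 1).PosSemidef) (hμ : 0 < μ)
    (v : EuclideanSpace ℝ n) : ‖toEuclideanLin A⁻¹ v‖ ≤ μ⁻¹ * ‖v‖ := by
  have hAA : toEuclideanLin A (toEuclideanLin A⁻¹ v) = v := by
    rw [← LinearMap.comp_apply, ← toLpLin_mul_same,
      mul_nonsing_inv _ ((hA.posDef_of_sub_smul_one hμ).isUnit.map detMonoidHom), toLpLin_one,
      LinearMap.id_apply]
  rw [inv_mul_eq_div, le_div_iff₀' hμ]
  simpa only [hAA] using hA.mul_norm_le_norm_toEuclideanLin (toEuclideanLin A⁻¹ v)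

end Matrix

theorem stmt_12_general (d T : ℕ) (h v : Fin T → EuclideanSpace ℝ (Fin d))
    (μ : ℝ) (hμ : 0 < μ)
    (F : Fin T → Matrix (Fin d) (Fin d) ℝ)
    (hpsd : ∀ t, (F t - μ • (1 : Matrix (Fin d) (Fin d) ℝ)).PosSemidef) :
    (∀ t, IsUnit (F t)) ∧
      ((1 / T : ℝ) * ∑ t, ‖h t - Matrix.toEuclideanLin (F t)⁻¹ (v t)‖) ^ 2
        ≤ (2 / T) * ∑ t, ‖h t - v t‖ ^ 2
          + (2 * (1 + 1 / μ) ^ 2 / T) * ∑ t, ‖v t‖ ^ 2 := by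
  refine ⟨fun t => ((hpsd t).posDef_of_sub_smul_one hμ).isUnit, ?_⟩
  set e := fun t => ‖h t - toEuclideanLin (F t)⁻¹ (v t)‖
  have he : ∀ t, e t ^ 2 ≤ 2 * ‖h t - v t‖ ^ 2 + 2 * (1 + 1 / μ) ^ 2 * ‖v t‖ ^ 2 := by
    intro t
    have hinv := (hpsd t).norm_toEuclideanLin_inv_le hμ (v t)
    rw [← one_div μ] at hinv
    calc e t ^ 2 ≤ (‖h t - v t‖ + (1 + 1 / μ) * ‖v t‖) ^ 2 := by
          gcongr; exact norm_sub_le_of_norm_le_mul hinv (h t)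
      _ ≤ 2 * (‖h t - v t‖ ^ 2 + ((1 + 1 / μ) * ‖v t‖) ^ 2) := add_sq_le
      _ = _ := by ring
  calc ((1 / T : ℝ) * ∑ t, e t) ^ 2 ≤ (∑ t, e t ^ 2) / T := by
        simpa [div_eq_inv_mul] using
          sum_div_card_sq_le_sum_sq_div_card (s := Finset.univ) (f := e)
    _ ≤ (∑ t, (2 * ‖h t - v t‖ ^ 2 + 2 * (1 + 1 / μ) ^ 2 * ‖v t‖ ^ 2)) / T := by
        gcongr with t; exact he t
    _ = _ := by rw [Finset.sum_add_distrib, ← Finset.mul_sum, ← Finset.mul_sum]; ring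

/-- Natural-gradient direction error bound used in the proof of Theorem 1: if each
symmetric matrix `F t` satisfies `F t − μ I ⪰ 0` with `μ > 0`, then each `F t` is
invertible and
`((1/T) ∑_t ‖h t − (F t)⁻¹ v t‖)² ≤ (2/T) ∑_t ‖h t − v t‖² + (2(1+1/μ)²/T) ∑_t ‖v t‖²`. -/
theorem stmt_12 (d T : ℕ) (h v : Fin T → EuclideanSpace ℝ (Fin d))
    (μ : ℝ) (hμ : 0 < μ)
    (F : Fin T → Matrix (Fin d) (Fin d) ℝ)
    (hsymm : ∀ t, (F t).IsSymm)
    (hpsd : ∀ t, (F t - μ • (1 : Matrix (Fin d) (Fin d) ℝ)).PosSemidef) :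
    (∀ t, IsUnit (F t)) ∧
      ((1 / T : ℝ) * ∑ t, ‖h t - Matrix.toEuclideanLin (F t)⁻¹ (v t)‖) ^ 2
        ≤ (2 / T) * ∑ t, ‖h t - v t‖ ^ 2
          + (2 * (1 + 1 / μ) ^ 2 / T) * ∑ t, ‖v t‖ ^ 2 :=
  stmt_12_general d T h v μ hμ F hpsd
end
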